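/- arXiv:2408.05349 — 4 statements merged into one kernel-verified Lean document; each statement's English description precedes it below -/
import Mathlib

section
/- The signed prefix reversals r_1, …, r_n generate the hyperoctahedral group B_n. -/
/-- The set `±[n] = {-n, …, -1, 1, …, n}` as a subtype of `ℤ`. -/
def PM (n : ℕ) : Type := {x : ℤ // x ≠ 0 ∧ x.natAbs ≤ n}

instance (n : ℕ) : DecidableEq (PM n) := fun a b =>
  decidable_of_iff _ Subtype.ext_iff.symm

instance (n : ℕ) : Finite (PM n) :=
  Set.Finite.to_subtype (s := {x : ℤ | x ≠ 0 ∧ x.natAbs ≤ n})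
    (Set.Finite.subset (Set.finite_Icc (-(n : ℤ)) n)
      (fun x hx => by simp only [Set.mem_setOf_eq] at hx; simp only [Set.mem_Icc]; omega))

noncomputable instance (n : ℕ) : Fintype (PM n) := Fintype.ofFinite _

/-- Negation on `±[n]`. -/
def negPM (n : ℕ) (x : PM n) : PM n :=
  ⟨-x.1, by have hx := x.2; constructor <;> omega⟩

/-- The `i`-th signed prefix reversal `r_i = (1,-i)(2,-(i-1))⋯(i,-1)` as a
function on `ℤ`: it sends `x` with `1 ≤ x ≤ i` to `-(i+1-x)`, sends `x` with
`-i ≤ x ≤ -1` to `i+1+x`, and fixes every other `x`. -/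
def rfun (i x : ℤ) : ℤ :=
  if 1 ≤ x ∧ x ≤ i then x - i - 1 else if -i ≤ x ∧ x ≤ -1 then x + i + 1 else x

lemma rfun_invol (i : ℤ) : Function.Involutive (rfun i) := by
  intro x; unfold rfun; split_ifs <;> omega

/-- The signed prefix reversal `r_{i+1}` (for `i : Fin n`, so that the
one-based index `i+1` ranges over `1, …, n`) as a map `±[n] → ±[n]`. -/
def rMap (n : ℕ) (i : Fin n) (x : PM n) : PM n :=
  ⟨rfun ((i : ℕ) + 1) x.1, by
    have hx := x.2; have hi := i.2; unfold rfun; split_ifs <;> constructor <;> omega⟩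

/-- The signed prefix reversal `r_{i+1}` as a permutation of `±[n]`. -/
def rPerm (n : ℕ) (i : Fin n) : Equiv.Perm (PM n) :=
  Function.Involutive.toPerm (rMap n i)
    (by intro x; apply Subtype.ext; exact rfun_invol _ x.1)

/-- The hyperoctahedral group `B_n`, realized as the subgroup of permutations
`σ` of `±[n]` satisfying `σ(-x) = -σ(x)`. -/
def Bgroup (n : ℕ) : Subgroup (Equiv.Perm (PM n)) where
  carrier := {σ | ∀ x, σ (negPM n x) = negPM n (σ x)}
  one_mem' := fun _ => rfl
  mul_mem' := by
    intro a b ha hb x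
    simp only [Equiv.Perm.mul_apply, hb x, ha (b x)]
  inv_mem' := by
    intro a ha x
    have h := ha (a⁻¹ x)
    rw [show a (a⁻¹ x) = x from a.apply_symm_apply x] at h
    rw [← h]
    exact a.symm_apply_apply _

lemma rPerm_mem (n : ℕ) (i : Fin n) : rPerm n i ∈ Bgroup n := by
  intro x
  apply Subtype.ext
  show rfun ((i : ℕ) + 1) (-x.1) = -(rfun ((i : ℕ) + 1) x.1)
  have hx := x.2
  unfold rfun
  split_ifs <;> omega

/-- The signed prefix reversal `r_{i+1}` as an element of `B_n`. -/
def rElem (n : ℕ) (i : Fin n) : ↥(Bgroup n) := ⟨rPerm n i, rPerm_mem n i⟩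

lemma rElem_mul_self (n : ℕ) (i : Fin n) : rElem n i * rElem n i = 1 := by
  apply Subtype.ext
  apply Equiv.ext
  intro x
  apply Subtype.ext
  exact rfun_invol _ x.1

/-- The burnt pancake graph `BP_n`: the Cayley graph of `B_n` with respect to
the signed prefix reversals `r_1, …, r_n`. -/
def BP (n : ℕ) : SimpleGraph ↥(Bgroup n) where
  Adj σ τ := σ ≠ τ ∧ ∃ i : Fin n, τ = σ * rElem n i
  symm := ⟨by
    rintro σ τ ⟨hne, i, rfl⟩
    exact ⟨hne.symm, i, by rw [mul_assoc, rElem_mul_self, mul_one]⟩⟩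
  loopless := ⟨fun σ h => h.1 rfl⟩

instance (n : ℕ) : Finite ↥(Bgroup n) := Subtype.finite

noncomputable instance (n : ℕ) : Fintype ↥(Bgroup n) := Fintype.ofFinite _

noncomputable instance (n : ℕ) (v : ↥(Bgroup n)) : Fintype ((BP n).neighborSet v) :=
  Fintype.ofFinite _

/-! Pancake sorting. Suppose `σ ∈ B_n` fixes every `x` with `|x| > m`, and let `c = σ⁻¹(m)`,
so `|c| ≤ m`. The reversal `r_m` sends `m` to `-1`, and from `-1` the reversals `r_{|c|}`
(if `c > 0`) or `r_{|c|} r_1` (if `c < 0`) reach `c`, all without touching `|x| > m`.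
Composing `σ` with this product of reversals gives an element of `B_n` fixing `m`, hence
also `-m`, and by induction on `m` every element of `B_n` is a product of reversals. -/

lemma rfun_of_lt_natAbs {i x : ℤ} (h : i < x.natAbs) : rfun i x = x := by
  unfold rfun; split_ifs <;> omega

lemma rfun_self {i : ℤ} (hi : 1 ≤ i) : rfun i i = -1 := by
  unfold rfun; split_ifs <;> omega

lemma rfun_neg_one {i : ℤ} (hi : 1 ≤ i) : rfun i (-1) = i := by
  unfold rfun; split_ifs <;> omega

lemma rfun_one {i : ℤ} (hi : 1 ≤ i) : rfun i 1 = -i := by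
  unfold rfun; split_ifs <;> omega

namespace PrefixReversal

variable {n : ℕ}

def ofFin (i : Fin n) : PM n := ⟨(i : ℕ) + 1, by omega⟩

lemma natAbs_ofFin (i : Fin n) : (ofFin i).1.natAbs = (i : ℕ) + 1 := by
  simp only [ofFin]; omega

lemma eq_ofFin_or_eq_neg (i : Fin n) (x : PM n) (hx : x.1.natAbs = (i : ℕ) + 1) :
    x = ofFin i ∨ x = negPM n (ofFin i) := by
  rcases Int.natAbs_eq x.1 with h | h
  · exact .inl (Subtype.ext (by simp only [ofFin]; omega))
  · exact .inr (Subtype.ext (by simp only [ofFin, negPM]; omega))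

lemma rPerm_apply_val (i : Fin n) (x : PM n) : (rPerm n i x).1 = rfun ((i : ℕ) + 1) x.1 :=
  rfl

def FixesAbove (m : ℕ) (σ : Equiv.Perm (PM n)) : Prop :=
  ∀ x : PM n, m < x.1.natAbs → σ x = x

lemma FixesAbove.mono {m m' : ℕ} {σ : Equiv.Perm (PM n)} (h : FixesAbove m σ) (hm : m ≤ m') :
    FixesAbove m' σ :=
  fun x hx => h x (by omega)

lemma FixesAbove.mul {m : ℕ} {σ τ : Equiv.Perm (PM n)} (hσ : FixesAbove m σ)
    (hτ : FixesAbove m τ) : FixesAbove m (σ * τ) := by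
  intro x hx
  rw [Equiv.Perm.mul_apply, hτ x hx, hσ x hx]

lemma fixesAbove_of_le {m : ℕ} (hm : n ≤ m) (σ : Equiv.Perm (PM n)) : FixesAbove m σ :=
  fun x hx => absurd x.2.2 (by omega)

lemma FixesAbove.eq_one {σ : Equiv.Perm (PM n)} (h : FixesAbove 0 σ) : σ = 1 :=
  Equiv.ext fun x => h x (Int.natAbs_pos.mpr x.2.1)

lemma fixesAbove_rPerm (i : Fin n) : FixesAbove ((i : ℕ) + 1) (rPerm n i) :=
  fun x hx => Subtype.ext (rfun_of_lt_natAbs (by omega))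

lemma FixesAbove.of_apply_ofFin {i : Fin n} {σ : Equiv.Perm (PM n)} (hB : σ ∈ Bgroup n)
    (h : FixesAbove ((i : ℕ) + 1) σ) (hi : σ (ofFin i) = ofFin i) : FixesAbove i σ := by
  intro x hx
  rcases Nat.lt_or_ge ((i : ℕ) + 1) x.1.natAbs with hlt | hle
  · exact h x hlt
  · rcases eq_ofFin_or_eq_neg i x (by omega) with rfl | rfl
    · exact hi
    · rw [hB, hi]

lemma rPerm_mem_closure (i : Fin n) : rPerm n i ∈ Subgroup.closure (Set.range (rPerm n)) :=
  Subgroup.subset_closure ⟨i, rfl⟩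

lemma closure_rPerm_le : Subgroup.closure (Set.range (rPerm n)) ≤ Bgroup n := by
  rw [Subgroup.closure_le]
  rintro _ ⟨i, rfl⟩
  exact rPerm_mem n i

lemma exists_mem_closure_apply_neg_one (c : PM n) :
    ∃ ρ ∈ Subgroup.closure (Set.range (rPerm n)),
      FixesAbove c.1.natAbs ρ ∧ ∀ x : PM n, x.1 = -1 → ρ x = c := by
  have hc := c.2
  obtain ⟨a, ha⟩ : ∃ a : Fin n, (a : ℕ) + 1 = c.1.natAbs :=
    ⟨⟨c.1.natAbs - 1, by omega⟩, Nat.sub_add_cancel (Int.natAbs_pos.mpr hc.1)⟩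
  have hfix := fixesAbove_rPerm a
  rw [ha] at hfix
  rcases Int.natAbs_eq c.1 with hpos | hneg
  · refine ⟨rPerm n a, rPerm_mem_closure a, hfix, fun x hx => Subtype.ext ?_⟩
    rw [rPerm_apply_val, hx, rfun_neg_one (by omega)]
    omega
  · let a₀ : Fin n := ⟨0, by omega⟩
    have hfix₀ : FixesAbove c.1.natAbs (rPerm n a₀) :=
      (fixesAbove_rPerm a₀).mono (show 0 + 1 ≤ _ by omega)
    refine ⟨rPerm n a * rPerm n a₀, mul_mem (rPerm_mem_closure a) (rPerm_mem_closure a₀),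
      hfix.mul hfix₀, fun x hx => Subtype.ext ?_⟩
    rw [Equiv.Perm.mul_apply, rPerm_apply_val, rPerm_apply_val, hx]
    simp only [a₀, Nat.cast_zero, zero_add]
    rw [rfun_neg_one le_rfl, rfun_one (by omega)]
    omega

lemma exists_mem_closure_apply_ofFin (i : Fin n) (c : PM n) (hc : c.1.natAbs ≤ (i : ℕ) + 1) :
    ∃ ρ ∈ Subgroup.closure (Set.range (rPerm n)),
      FixesAbove ((i : ℕ) + 1) ρ ∧ ρ (ofFin i) = c := by
  obtain ⟨ρ, hρ, hfix, hρc⟩ := exists_mem_closure_apply_neg_one c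
  refine ⟨ρ * rPerm n i, mul_mem hρ (rPerm_mem_closure i),
    (hfix.mono hc).mul (fixesAbove_rPerm i), hρc _ ?_⟩
  rw [rPerm_apply_val, ofFin, rfun_self (by omega)]

lemma mem_closure_of_fixesAbove (m : ℕ) {σ : Equiv.Perm (PM n)} (hB : σ ∈ Bgroup n)
    (hσ : FixesAbove m σ) : σ ∈ Subgroup.closure (Set.range (rPerm n)) := by
  induction m generalizing σ with
  | zero => rw [hσ.eq_one]; exact one_mem _
  | succ m ih =>
    rcases Nat.lt_or_ge m n with hmn | hnm
    · let i : Fin n := ⟨m, hmn⟩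
      set c := σ⁻¹ (ofFin i)
      have hσc : σ c = ofFin i := σ.apply_symm_apply _
      have hc : c.1.natAbs ≤ m + 1 := by
        by_contra! hlt
        have hci : c = ofFin i := (hσ c hlt).symm.trans hσc
        rw [hci, natAbs_ofFin] at hlt
        exact hlt.false
      obtain ⟨ρ, hρ, hρfix, hρc⟩ := exists_mem_closure_apply_ofFin i c hc
      have hσρB : σ * ρ ∈ Bgroup n := mul_mem hB (closure_rPerm_le hρ)
      have hσρ : σ * ρ ∈ Subgroup.closure (Set.range (rPerm n)) :=
        ih hσρB <| (hσ.mul hρfix).of_apply_ofFin hσρB <| by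
          rw [Equiv.Perm.mul_apply, hρc, hσc]
      exact (Subgroup.mul_mem_cancel_right _ hρ).mp hσρ
    · exact ih hB (fixesAbove_of_le hnm σ)

end PrefixReversal

open PrefixReversal in
/-- The signed prefix reversals `r_1, …, r_n` generate the
hyperoctahedral group `B_n`. -/
theorem prefixReversals_generate (n : ℕ) :
    Subgroup.closure (Set.range (rPerm n)) = Bgroup n :=
  le_antisymm closure_rPerm_le fun _ hσ =>
    mem_closure_of_fixesAbove n hσ (fixesAbove_of_le le_rfl _)
end

section
/- For n ≥ 1, the sum of the permutation matrices of the signed prefix reversals r_1,…,r_n (acting on ±[n] ordered as −n < ⋯ < −1 < 1 < ⋯ < n) equals the 2n×2n block matrix M(BP_n) = [[A_n, D_n^T],[D_n, C_n]], where A_n is the n×n diagonal matrix with entries a_{ii} = n−i, C_n is diagonal with c_{ii} = i−1, and D_n is the n×n upper triangular matrix with all entries on and above the diagonal equal to 1. -/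
/-- Identification of `Fin n ⊕ Fin n` with `±[n] = {-n,…,-1,1,…,n}` in
increasing order: `inl j ↦ j - n` (giving `-n,…,-1`) and `inr j ↦ j + 1`
(giving `1,…,n`). -/
def toInt (n : ℕ) : Fin n ⊕ Fin n → ℤ :=
  Sum.elim (fun j => (j : ℤ) - n) (fun j => (j : ℤ) + 1)

/-- The permutation matrix `P(r_i)` of the signed prefix reversal `r_i`, with
rows and columns indexed by `±[n]` in increasing order: the `(x,y)` entry is
`1` iff `r_i(y) = x`. -/
def Pmat (n : ℕ) (i : ℤ) : Matrix (Fin n ⊕ Fin n) (Fin n ⊕ Fin n) ℝ :=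
  Matrix.of fun x y => if rfun i (toInt n y) = toInt n x then 1 else 0

/-- The `n × n` diagonal matrix `A_n` with `(i,i)` entry `n - i`. -/
def An (n : ℕ) : Matrix (Fin n) (Fin n) ℝ :=
  Matrix.diagonal fun j => (n : ℝ) - (j : ℕ) - 1

/-- The `n × n` diagonal matrix `C_n` with `(i,i)` entry `i - 1`. -/
def Cn (n : ℕ) : Matrix (Fin n) (Fin n) ℝ :=
  Matrix.diagonal fun j => ((j : ℕ) : ℝ)

/-- The `n × n` upper triangular all-ones matrix `D_n`. -/
def Dn (n : ℕ) : Matrix (Fin n) (Fin n) ℝ :=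
  Matrix.of fun j k => if j ≤ k then 1 else 0

/-- The `2n × 2n` block matrix `M(BP_n) = [[A_n, D_nᵀ], [D_n, C_n]]`. -/
def Mbp (n : ℕ) : Matrix (Fin n ⊕ Fin n) (Fin n ⊕ Fin n) ℝ :=
  Matrix.fromBlocks (An n) (Dn n).transpose (Dn n) (Cn n)

/-!
Entry `(x, y)` of `∑ P(r_i)` counts the `i ∈ [1, n]` with `r_i(y) = x`. The reversal `r_i` fixes
`y` iff `i < |y|`, and otherwise sends `y` to the point `x` of opposite sign with
`|x| + |y| = i + 1`. Hence a diagonal entry is `|y| - 1`, and an off-diagonal entry is `1` exactly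
when `x` and `y` have opposite signs and `|x| + |y| ≤ n + 1`; this is the block pattern of
`M(BP_n)`.
-/

open Finset

lemma rfun_eq_iff {y : ℤ} (hy : y ≠ 0) (i x : ℤ) :
    rfun i y = x ↔ (x = y ∧ i < |y|) ∨ (x * y < 0 ∧ |x| + |y| = i + 1) := by
  rw [mul_neg_iff]
  unfold rfun
  rcases hy.lt_or_gt with hy | hy
  · rw [abs_of_neg hy]
    rcases lt_trichotomy x 0 with hx | rfl | hx
    · rw [abs_of_neg hx]; split_ifs <;> omega
    · simp only [abs_zero]; split_ifs <;> omega
    · rw [abs_of_pos hx]; split_ifs <;> omega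
  · rw [abs_of_pos hy]
    rcases lt_trichotomy x 0 with hx | rfl | hx
    · rw [abs_of_neg hx]; split_ifs <;> omega
    · simp only [abs_zero]; split_ifs <;> omega
    · rw [abs_of_pos hx]; split_ifs <;> omega

lemma card_filter_rfun_eq {m : ℕ} {x y : ℤ} (hy : y ≠ 0) (hym : |y| ≤ m) :
    (#{i ∈ Icc (1 : ℤ) m | rfun i y = x} : ℤ) =
      if x = y then |y| - 1 else if x * y < 0 ∧ |x| + |y| ≤ m + 1 then 1 else 0 := by
  have hy' : 0 < |y| := abs_pos.mpr hy
  split_ifs with hxy hopp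
  · subst hxy
    have hfix : {i ∈ Icc (1 : ℤ) m | rfun i x = x} = Ico 1 |x| := by
      ext i
      simp only [mem_filter, mem_Icc, mem_Ico, rfun_eq_iff hy, true_and,
        (mul_self_nonneg x).not_gt, false_and, or_false]
      omega
    rw [hfix, Int.card_Ico, Int.toNat_of_nonneg (by omega)]
  · have hx' : 0 < |x| := abs_pos.mpr (by rintro rfl; simp at hopp)
    have hswap : {i ∈ Icc (1 : ℤ) m | rfun i y = x} = {|x| + |y| - 1} := by
      ext i
      simp only [mem_filter, mem_Icc, mem_singleton, rfun_eq_iff hy, hxy, hopp.1, false_and,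
        true_and, false_or]
      omega
    simp [hswap]
  · rw [Int.natCast_eq_zero, card_eq_zero, filter_eq_empty_iff]
    intro i hi
    rw [mem_Icc] at hi
    rw [rfun_eq_iff hy]
    rintro (⟨rfl, -⟩ | ⟨hneg, hsum⟩)
    exacts [hxy rfl, hopp ⟨hneg, by omega⟩]

lemma sum_Pmat_apply (n : ℕ) (x y : Fin n ⊕ Fin n) :
    (∑ i ∈ Icc (1 : ℤ) n, Pmat n i) x y =
      #{i ∈ Icc (1 : ℤ) n | rfun i (toInt n y) = toInt n x} := by
  simp [Matrix.sum_apply, Pmat, sum_boole]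

lemma toInt_injective (n : ℕ) : Function.Injective (toInt n) := by
  rintro (j | j) (k | k) h <;> simp only [toInt, Sum.elim_inl, Sum.elim_inr] at h <;>
    first | omega | (congr 1; ext; omega)

section toInt

variable {n : ℕ}

lemma toInt_inl_neg (j : Fin n) : toInt n (.inl j) < 0 := by simp [toInt]

lemma toInt_inr_pos (j : Fin n) : 0 < toInt n (.inr j) := by simp [toInt]

lemma abs_toInt_inl (j : Fin n) : |toInt n (.inl j)| = n - j := by
  rw [abs_of_neg (toInt_inl_neg j)]; simp [toInt]

lemma abs_toInt_inr (j : Fin n) : |toInt n (.inr j)| = j + 1 := by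
  rw [abs_of_pos (toInt_inr_pos j)]; simp [toInt]

lemma toInt_ne_zero (x : Fin n ⊕ Fin n) : toInt n x ≠ 0 := by
  rcases x with j | j
  exacts [(toInt_inl_neg j).ne, (toInt_inr_pos j).ne']

lemma abs_toInt_le (x : Fin n ⊕ Fin n) : |toInt n x| ≤ n := by
  rcases x with j | j <;> simp only [abs_toInt_inl, abs_toInt_inr] <;> omega

end toInt

lemma Mbp_apply (n : ℕ) (x y : Fin n ⊕ Fin n) :
    Mbp n x y =
      ((if toInt n x = toInt n y then |toInt n y| - 1
        else if toInt n x * toInt n y < 0 ∧ |toInt n x| + |toInt n y| ≤ n + 1 then 1 else 0 : ℤ) :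
        ℝ) := by
  rcases x with j | j <;> rcases y with k | k <;>
    simp only [abs_toInt_inl, abs_toInt_inr, mul_neg_iff, toInt_inl_neg, toInt_inr_pos,
      (toInt_inl_neg _).not_gt, (toInt_inr_pos _).not_gt, (toInt_injective n).eq_iff,
      Sum.inl.injEq, Sum.inr.injEq, reduceCtorEq, true_and, and_true, false_and, and_false,
      or_false, false_or, if_false, Int.cast_ite, Int.cast_one, Int.cast_zero,
      Mbp, Matrix.fromBlocks_apply₁₁, Matrix.fromBlocks_apply₁₂,
      Matrix.fromBlocks_apply₂₁, Matrix.fromBlocks_apply₂₂, Matrix.transpose_apply, An, Cn, Dn, Matrix.of_apply,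
      Matrix.diagonal_apply, Fin.le_def] <;>
    split_ifs <;> first | rfl | (exfalso; omega) | (subst_vars; push_cast; ring)

theorem sum_Pmat_eq_Mbp_general (n : ℕ) :
    ∑ i ∈ Finset.Icc (1 : ℤ) (n : ℤ), Pmat n i = Mbp n := by
  ext x y
  rw [sum_Pmat_apply, ← Int.cast_natCast,
    card_filter_rfun_eq (toInt_ne_zero y) (abs_toInt_le y), Mbp_apply]

/-- For `n ≥ 1`, the sum of the permutation matrices of the
signed prefix reversals `r_1, …, r_n` (acting on `±[n]` ordered as
`-n < ⋯ < -1 < 1 < ⋯ < n`) equals the block matrix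
`M(BP_n) = [[A_n, D_nᵀ], [D_n, C_n]]`. -/
theorem sum_Pmat_eq_Mbp (n : ℕ) (hn : 1 ≤ n) :
    ∑ i ∈ Finset.Icc (1 : ℤ) (n : ℤ), Pmat n i = Mbp n :=
  sum_Pmat_eq_Mbp_general n
end

section
/- For n ≥ 3, the vector (n−2, −1, …, −1, 0, 0, −1, …, −1, n−2) of length 2n (with n−2 entries −1 in each block) is an eigenvector of M(BP_n) with eigenvalue n−1. -/
/-- The vector `(n-2, -1, …, -1, 0, 0, -1, …, -1, n-2)` of length `2n`, with
`n-2` entries `-1` in each block (0-indexed positions: in the first block,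
position `0` carries `n-2`, positions `1,…,n-2` carry `-1`, position `n-1`
carries `0`; symmetrically in the second block). -/
def v8 (n : ℕ) : Fin n ⊕ Fin n → ℝ :=
  Sum.elim
    (fun j => if (j : ℕ) = 0 then (n : ℝ) - 2 else if (j : ℕ) = n - 1 then 0 else -1)
    (fun j => if (j : ℕ) = n - 1 then (n : ℝ) - 2 else if (j : ℕ) = 0 then 0 else -1)


/-! Row by row, `M(BP_n) v` is a diagonal term plus a prefix sum of the second block of `v`
(rows of `A_n`) or a suffix sum of its first block (rows of `C_n`). Each block of `v8 n` is the
constant `-1` plus point masses at the two ends, so these partial sums are `-i` and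
`-(n - 1 - i)` away from the ends, and the eigenvalue equation reduces to a check at
`i = 0`, `i = n - 1` and the generic index. -/

open Finset Matrix

theorem Fin.sum_Iic_comp_val {M : Type*} [AddCommMonoid M] {n : ℕ} (g : ℕ → M) (i : Fin n) :
    ∑ j ∈ Iic i, g j = ∑ k ∈ Iic (i : ℕ), g k := by
  rw [← Fin.map_valEmbedding_Iic, sum_map]
  rfl

theorem Fin.sum_Ici_comp_val {M : Type*} [AddCommMonoid M] {n : ℕ} (g : ℕ → M) (i : Fin n) :
    ∑ j ∈ Ici i, g j = ∑ k ∈ Ico (i : ℕ) n, g k := by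
  rw [← Fin.map_valEmbedding_Ici, sum_map]
  rfl

theorem Dn_transpose_mulVec_apply {n : ℕ} (w : Fin n → ℝ) (i : Fin n) :
    ((Dn n)ᵀ *ᵥ w) i = ∑ j ∈ Iic i, w j := by
  simp [mulVec, dotProduct, Dn, ← sum_filter, filter_ge_eq_Iic]

theorem Dn_mulVec_apply {n : ℕ} (w : Fin n → ℝ) (i : Fin n) :
    (Dn n *ᵥ w) i = ∑ j ∈ Ici i, w j := by
  simp [mulVec, dotProduct, Dn, ← sum_filter, filter_le_eq_Ici]

theorem Mbp_mulVec_inl {n : ℕ} (v : Fin n ⊕ Fin n → ℝ) (i : Fin n) :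
    (Mbp n *ᵥ v) (Sum.inl i) = ((n : ℝ) - i - 1) * v (Sum.inl i) + ∑ j ∈ Iic i, v (Sum.inr j) := by
  simp [Mbp, fromBlocks_mulVec, An, mulVec_diagonal, Dn_transpose_mulVec_apply]

theorem Mbp_mulVec_inr {n : ℕ} (v : Fin n ⊕ Fin n → ℝ) (i : Fin n) :
    (Mbp n *ᵥ v) (Sum.inr i) = ∑ j ∈ Ici i, v (Sum.inl j) + i * v (Sum.inr i) := by
  simp [Mbp, fromBlocks_mulVec, Cn, mulVec_diagonal, Dn_mulVec_apply]

theorem sum_Iic_v8_inr {n : ℕ} (hn : 2 ≤ n) (i : Fin n) :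
    ∑ j ∈ Iic i, v8 n (Sum.inr j) = if (i : ℕ) = n - 1 then 0 else -(i : ℝ) := by
  have hsplit : ∀ j : Fin n, v8 n (Sum.inr j) =
      (if (j : ℕ) = n - 1 then (n : ℝ) - 1 else 0) + (if (j : ℕ) = 0 then 1 else 0) - 1 := by
    intro j
    simp only [v8, Sum.elim_inr]
    split_ifs <;> first | omega | ring
  have hlast : n - 1 ≤ (i : ℕ) ↔ (i : ℕ) = n - 1 := by omega
  simp only [hsplit, Fin.sum_Iic_comp_val (fun k => (if k = n - 1 then (n : ℝ) - 1 else 0)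
    + (if k = 0 then 1 else 0) - 1), sum_sub_distrib, sum_add_distrib, sum_ite_eq', sum_const,
    Nat.card_Iic, mem_Iic, zero_le, if_true, hlast, nsmul_eq_mul, mul_one]
  split_ifs with h
  · rw [h, Nat.sub_add_cancel (by omega : 1 ≤ n)]
    ring
  · push_cast
    ring

theorem sum_Ici_v8_inl {n : ℕ} (hn : 2 ≤ n) (i : Fin n) :
    ∑ j ∈ Ici i, v8 n (Sum.inl j) = if (i : ℕ) = 0 then 0 else -((n : ℝ) - 1 - i) := by
  have hsplit : ∀ j : Fin n, v8 n (Sum.inl j) =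
      (if (j : ℕ) = 0 then (n : ℝ) - 1 else 0) + (if (j : ℕ) = n - 1 then 1 else 0) - 1 := by
    intro j
    simp only [v8, Sum.elim_inl]
    split_ifs <;> first | omega | ring
  have hfirst : 0 ∈ Ico (i : ℕ) n ↔ (i : ℕ) = 0 := by simp only [mem_Ico]; omega
  have hlast : n - 1 ∈ Ico (i : ℕ) n := by simp only [mem_Ico]; omega
  simp only [hsplit, Fin.sum_Ici_comp_val (fun k => (if k = 0 then (n : ℝ) - 1 else 0)
    + (if k = n - 1 then 1 else 0) - 1), sum_sub_distrib, sum_add_distrib, sum_ite_eq', sum_const,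
    Nat.card_Ico, hfirst, hlast, if_true, nsmul_eq_mul, mul_one, Nat.cast_sub i.isLt.le]
  split_ifs with h
  · rw [h]
    ring
  · ring

theorem Mbp_mulVec_v8 {n : ℕ} (hn : 2 ≤ n) : Mbp n *ᵥ v8 n = ((n : ℝ) - 1) • v8 n := by
  have hcast : ((n - 1 : ℕ) : ℝ) = n - 1 := by
    rw [Nat.cast_sub (by omega), Nat.cast_one]
  ext (i | i)
  · rw [Mbp_mulVec_inl, sum_Iic_v8_inr hn]
    simp only [v8, Sum.elim_inl, Pi.smul_apply, smul_eq_mul]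
    split_ifs with h₀ h₁ h₁ <;> simp only [h₀, h₁, hcast] at * <;> first | omega | ring
  · rw [Mbp_mulVec_inr, sum_Ici_v8_inl hn]
    simp only [v8, Sum.elim_inr, Pi.smul_apply, smul_eq_mul]
    split_ifs with h₀ h₁ h₁ <;> simp only [h₀, h₁, hcast] at * <;> first | omega | ring

/-- For `n ≥ 3`, the vector
`(n-2, -1, …, -1, 0, 0, -1, …, -1, n-2)` of length `2n` is an eigenvector of
`M(BP_n)` with eigenvalue `n - 1`. -/
theorem v8_eigenvector_Mbp (n : ℕ) (hn : 3 ≤ n) :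
    v8 n ≠ 0 ∧ (Mbp n).mulVec (v8 n) = ((n : ℝ) - 1) • v8 n := by
  refine ⟨fun h => ?_, Mbp_mulVec_v8 (by omega)⟩
  have h₀ := congrFun h (Sum.inl ⟨0, by omega⟩)
  have hn' : (3 : ℝ) ≤ n := by exact_mod_cast hn
  simp only [v8, Sum.elim_inl, if_true, Pi.zero_apply] at h₀
  linarith
end

section
/- For every n ≥ 1, every integer in the set {0, 1, …, n} \ {⌊n/2⌋} is an eigenvalue of the 2n×2n matrix M(BP_n) = [[A_n, D_n^T],[D_n, C_n]]. -/
/-!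
Write an eigenvector `(x, y)` of `M(BP_n)` for `m` through potentials: `x k = T k - T (k + 1)`
and `y k = S k - S (k - 1)`, so that `D_n x = T` and `D_nᵀ y = S`. The eigen-equations then become
two local identities between `T` and `S`. Both are solved by `T j = (m - j) χ j` and
`S j = (j + m + 1 - n) χ j`, where `χ` is the indicator of the band of integers between `m` and
`n - 1 - m`: the identities only fail where `χ` jumps, and `χ` jumps exactly where the coefficient
in front of the jump vanishes. The vector is nonzero unless the band contains no `j ≠ m`, which
for `m ≤ n` happens only at `m = ⌊n/2⌋`.
-/

open Finset Matrix Module.End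

namespace Mbp

variable {n : ℕ}

theorem Dn_mulVec_apply (x : Fin n → ℝ) (j : Fin n) : (Dn n *ᵥ x) j = ∑ k ∈ Ici j, x k := by
  simp only [mulVec, dotProduct, Dn, of_apply, ite_mul, one_mul, zero_mul, sum_ite,
    filter_le_eq_Ici, sum_const_zero, add_zero]

theorem Dn_transpose_mulVec_apply (x : Fin n → ℝ) (j : Fin n) :
    ((Dn n)ᵀ *ᵥ x) j = ∑ k ∈ Iic j, x k := by
  simp only [mulVec, dotProduct, Dn, transpose_apply, of_apply, ite_mul, one_mul, zero_mul,
    sum_ite, filter_ge_eq_Iic, sum_const_zero, add_zero]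

theorem Dn_mulVec_sub_succ (T : ℤ → ℝ) (j : Fin n) :
    (Dn n *ᵥ fun k => T k - T (k + 1)) j = T j - T n := by
  have := sum_Ico_sub (fun i : ℕ => -T i) j.is_le'
  rw [← Fin.map_valEmbedding_Ici, sum_map] at this
  simp only [Fin.valEmbedding_apply, Nat.cast_add, Nat.cast_one, neg_sub_neg] at this
  rw [Dn_mulVec_apply, this]

theorem Dn_transpose_mulVec_sub_pred (S : ℤ → ℝ) (j : Fin n) :
    ((Dn n)ᵀ *ᵥ fun k => S k - S (k - 1)) j = S j - S (-1) := by
  have := sum_Ico_sub (fun i : ℕ => S (i - 1)) (Nat.zero_le (j + 1))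
  rw [← range_eq_Ico, Nat.range_succ_eq_Iic, ← Fin.map_valEmbedding_Iic, sum_map] at this
  push_cast at this
  rw [Dn_transpose_mulVec_apply]
  simpa using this

theorem hasEigenvalue_of_potentials (μ : ℝ) (T S : ℤ → ℝ) (hTn : T n = 0) (hS : S (-1) = 0)
    (htop : ∀ j : ℤ, ((n : ℝ) - j - 1 - μ) * (T j - T (j + 1)) + S j = 0)
    (hbot : ∀ j : ℤ, T j + (j - μ) * (S j - S (j - 1)) = 0)
    (hT : ∃ j : Fin n, T j ≠ 0) :
    HasEigenvalue (toLin' (Mbp n)) μ := by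
  set x : Fin n → ℝ := fun k => T k - T (k + 1)
  set y : Fin n → ℝ := fun k => S k - S (k - 1)
  have hDx : Dn n *ᵥ x = fun j : Fin n => T j := funext fun j => by
    rw [Dn_mulVec_sub_succ, hTn, sub_zero]
  have hDy : (Dn n)ᵀ *ᵥ y = fun j : Fin n => S j := funext fun j => by
    rw [Dn_transpose_mulVec_sub_pred, hS, sub_zero]
  refine hasEigenvalue_of_hasEigenvector (x := Sum.elim x y) ⟨mem_eigenspace_iff.mpr ?_, ?_⟩
  · rw [toLin'_apply, Mbp, fromBlocks_mulVec, Sum.elim_comp_inl, Sum.elim_comp_inr, hDx, hDy]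
    ext (j | j)
    · simp only [An, Sum.elim_inl, Pi.add_apply, mulVec_diagonal, Pi.smul_apply, smul_eq_mul, x]
      linear_combination htop j
    · simp only [Cn, Sum.elim_inr, Pi.add_apply, mulVec_diagonal, Pi.smul_apply, smul_eq_mul, y]
      linear_combination hbot j
  · obtain ⟨j, hj⟩ := hT
    intro h0
    have hx : x = 0 := by simpa using congrArg (· ∘ Sum.inl) h0
    exact hj (by simpa [hx] using (congrFun hDx j).symm)

/-- The integers between `m` and `n - 1 - m`: the interval `[m, n - 1 - m]` when `2m < n`, and
`(n - 1 - m, m)` when `2m ≥ n`. -/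
def band (n m : ℕ) : Set ℤ := {j | (m : ℤ) ≤ j ↔ j + m < n}

noncomputable def bandIndicator (n m : ℕ) : ℤ → ℝ := (band n m).indicator 1

theorem bandIndicator_of_notMem {m : ℕ} {j : ℤ} (hj : j ∉ band n m) : bandIndicator n m j = 0 :=
  Set.indicator_of_notMem hj 1

theorem bandIndicator_of_mem {m : ℕ} {j : ℤ} (hj : j ∈ band n m) : bandIndicator n m j = 1 :=
  Set.indicator_of_mem hj 1

theorem mul_bandIndicator_succ_sub_eq_zero (n m : ℕ) (j : ℤ) :
    ((n : ℝ) - j - 1 - m) * (j + 1 - m) * (bandIndicator n m (j + 1) - bandIndicator n m j)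
      = 0 := by
  by_cases h : j + 1 ∈ band n m ↔ j ∈ band n m
  · have hflat : bandIndicator n m (j + 1) = bandIndicator n m j := by
      by_cases hj : j ∈ band n m
      · rw [bandIndicator_of_mem hj, bandIndicator_of_mem (h.2 hj)]
      · rw [bandIndicator_of_notMem hj, bandIndicator_of_notMem (mt h.1 hj)]
    rw [hflat, sub_self, mul_zero]
  · have hjump : ((n : ℤ) - j - 1 - m) * (j + 1 - m) = 0 := by
      simp only [band, Set.mem_ofPred_eq] at h
      exact mul_eq_zero.2 (by omega)
    rw [show ((n : ℝ) - j - 1 - m) * (j + 1 - m) = 0 by exact_mod_cast hjump, zero_mul]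

theorem hasEigenvalue_of_exists_mem_band {m : ℕ} (hm : m ≤ n)
    (hband : ∃ j : Fin n, (j : ℤ) ∈ band n m ∧ (j : ℤ) ≠ m) :
    HasEigenvalue (toLin' (Mbp n)) m := by
  refine hasEigenvalue_of_potentials m (fun j => (m - j) * bandIndicator n m j)
    (fun j => (j + m + 1 - n) * bandIndicator n m j) ?_ ?_ (fun j => ?_) (fun j => ?_) ?_
  · have hn : (n : ℤ) ∉ band n m := by simp only [band, Set.mem_ofPred_eq]; omega
    rw [bandIndicator_of_notMem hn, mul_zero]
  · have hneg : (-1 : ℤ) ∉ band n m := by simp only [band, Set.mem_ofPred_eq]; omega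
    rw [bandIndicator_of_notMem hneg, mul_zero]
  · push_cast
    linear_combination mul_bandIndicator_succ_sub_eq_zero n m j
  · have := mul_bandIndicator_succ_sub_eq_zero n m (j - 1)
    rw [sub_add_cancel] at this
    push_cast at this ⊢
    linear_combination -this
  · obtain ⟨j, hj, hjm⟩ := hband
    refine ⟨j, ?_⟩
    rw [bandIndicator_of_mem hj, mul_one, sub_ne_zero]
    exact_mod_cast hjm.symm

theorem exists_mem_band_ne {m : ℕ} (hm : m ≤ n) (hne : m ≠ n / 2) :
    ∃ j : Fin n, (j : ℤ) ∈ band n m ∧ (j : ℤ) ≠ m := by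
  rcases lt_or_gt_of_ne (show 2 * m ≠ n by omega) with h | h
  · exact ⟨⟨m + 1, by omega⟩, by simp only [band, Set.mem_ofPred_eq]; omega, show ((m + 1 : ℕ) : ℤ) ≠ m by omega⟩
  · exact ⟨⟨m - 1, by omega⟩, by simp only [band, Set.mem_ofPred_eq]; omega, show ((m - 1 : ℕ) : ℤ) ≠ m by omega⟩

end Mbp

theorem integer_eigenvalues_Mbp_general (n : ℕ) (m : ℕ) (hm : m ≤ n)
    (hne : m ≠ n / 2) :
    Module.End.HasEigenvalue (Matrix.toLin' (Mbp n)) (m : ℝ) :=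
  Mbp.hasEigenvalue_of_exists_mem_band hm (Mbp.exists_mem_band_ne hm hne)

/-- For every `n ≥ 1`, every integer in
`{0, 1, …, n} \ {⌊n/2⌋}` is an eigenvalue of the `2n × 2n` matrix
`M(BP_n) = [[A_n, D_nᵀ], [D_n, C_n]]`. -/
theorem integer_eigenvalues_Mbp (n : ℕ) (hn : 1 ≤ n) (m : ℕ) (hm : m ≤ n)
    (hne : m ≠ n / 2) :
    Module.End.HasEigenvalue (Matrix.toLin' (Mbp n)) (m : ℝ) :=
  integer_eigenvalues_Mbp_general n m hm hne
end
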